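/- arXiv:0807.3332 — 6 statements merged into one kernel-verified Lean document; each statement's English description precedes it below -/
import Mathlib

section
/- Let Y be a positive real-valued random variable that is not almost surely constant, with E[Y] < ∞, and define ν_m := (E[Y^{1/m}])^m for each integer m ≥ 1. Then the sequence of geometric means G_m := (ν_m · ν_{m-1} · ⋯ · ν_1)^{1/m} is strictly decreasing in m. -/
open MeasureTheory

/-- `ν_m := (E[Y^{1/m}])^m` for a positive random variable `Y`. -/
noncomputable def nuMoment {Ω : Type*} [MeasurableSpace Ω] (μ : Measure Ω) (Y : Ω → ℝ)
    (m : ℕ) : ℝ :=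
  (∫ ω, Y ω ^ ((1 : ℝ) / (m : ℝ)) ∂μ) ^ (m : ℝ)

section Aux

variable {Ω : Type*} [MeasurableSpace Ω] {μ : Measure Ω} [IsProbabilityMeasure μ]
variable {Y : Ω → ℝ}

lemma rpow_integrable_aux (hYpos : ∀ ω, 0 < Y ω) (hYint : Integrable Y μ)
    {p : ℝ} (hp0 : 0 < p) (hp1 : p ≤ 1) :
    Integrable (fun ω => Y ω ^ p) μ := by
  have hcont : Continuous fun x : ℝ => x ^ p :=
    continuous_iff_continuousAt.mpr fun x =>
      Real.continuousAt_rpow_const x p (Or.inr hp0.le)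
  refine Integrable.mono ((integrable_const (1:ℝ)).add hYint)
    (hcont.comp_aestronglyMeasurable hYint.1) (Filter.Eventually.of_forall fun ω => ?_)
  have hY := hYpos ω
  have h1 : Y ω ^ p ≤ 1 + Y ω := by
    rcases le_or_gt (Y ω) 1 with h | h
    · have := Real.rpow_le_one hY.le h hp0.le
      linarith
    · have := Real.rpow_le_rpow_of_exponent_le h.le hp1
      rw [Real.rpow_one] at this
      linarith
  have hpos : 0 < Y ω ^ p := Real.rpow_pos_of_pos hY p
  have happ : ((fun _ : Ω => (1:ℝ)) + Y) ω = 1 + Y ω := rfl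
  rw [Real.norm_eq_abs, Real.norm_eq_abs, happ, abs_of_pos hpos,
    abs_of_pos (by linarith : (0:ℝ) < 1 + Y ω)]
  exact h1

lemma integral_rpow_pos_aux (hYpos : ∀ ω, 0 < Y ω) (hYint : Integrable Y μ)
    {p : ℝ} (hp0 : 0 < p) (hp1 : p ≤ 1) :
    0 < ∫ ω, Y ω ^ p ∂μ := by
  rw [integral_pos_iff_support_of_nonneg
      (fun ω => (Real.rpow_pos_of_pos (hYpos ω) p).le)
      (rpow_integrable_aux hYpos hYint hp0 hp1)]
  have : Function.support (fun ω => Y ω ^ p) = Set.univ := by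
    ext ω; simp [(Real.rpow_pos_of_pos (hYpos ω) p).ne']
  rw [this]
  simp

/-- The key strict step: `ν_{k+1} < ν_k`. -/
lemma nu_step_aux (hYpos : ∀ ω, 0 < Y ω)
    (hYnonconst : ¬ ∃ c : ℝ, ∀ᵐ ω ∂μ, Y ω = c)
    (hYint : Integrable Y μ) {k : ℕ} (hk : 1 ≤ k) :
    nuMoment μ Y (k + 1) < nuMoment μ Y k := by
  have hk0 : (0:ℝ) < k := by exact_mod_cast hk
  have hk10 : (0:ℝ) < (k:ℝ) + 1 := by linarith
  set p : ℝ := 1 / (k : ℝ) with hp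
  set q : ℝ := 1 / ((k : ℝ) + 1) with hq
  set θ : ℝ := (k : ℝ) / ((k : ℝ) + 1) with hθ
  have hp0 : 0 < p := by positivity
  have hp1 : p ≤ 1 := by
    rw [hp, div_le_one hk0]; exact_mod_cast hk
  have hq0 : 0 < q := by positivity
  have hq1 : q ≤ 1 := by
    rw [hq, div_le_one hk10]; linarith
  have hθ0 : 0 < θ := by positivity
  have hθ1 : θ < 1 := by
    rw [hθ, div_lt_one hk10]; linarith
  have hpθ : p * θ = q := by
    rw [hp, hq, hθ]; field_simp
  set X : Ω → ℝ := fun ω => Y ω ^ p with hX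
  have hXpos : ∀ ω, 0 < X ω := fun ω => Real.rpow_pos_of_pos (hYpos ω) p
  have hXint : Integrable X μ := rpow_integrable_aux hYpos hYint hp0 hp1
  have hXθ : ∀ ω, X ω ^ θ = Y ω ^ q := by
    intro ω
    rw [hX, ← Real.rpow_mul (hYpos ω).le, hpθ]
  have hgXint : Integrable ((fun x : ℝ => x ^ θ) ∘ X) μ := by
    have : ((fun x : ℝ => x ^ θ) ∘ X) = fun ω => Y ω ^ q := funext fun ω => hXθ ω
    rw [this]
    exact rpow_integrable_aux hYpos hYint hq0 hq1
  have hcontθ : ContinuousOn (fun x : ℝ => x ^ θ) (Set.Ici 0) :=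
    (continuous_iff_continuousAt.mpr fun x =>
      Real.continuousAt_rpow_const x θ (Or.inr hθ0.le)).continuousOn
  have hjensen := (Real.strictConcaveOn_rpow hθ0 hθ1).ae_eq_const_or_lt_map_average
    hcontθ isClosed_Ici
    (Filter.Eventually.of_forall fun ω => (hXpos ω).le) hXint hgXint
  rcases hjensen with hconst | hlt
  · exfalso
    apply hYnonconst
    refine ⟨(⨍ ω, X ω ∂μ) ^ (1 / p), hconst.mono fun ω hω => ?_⟩
    have hYrec : Y ω = X ω ^ (1 / p) := by
      rw [hX, ← Real.rpow_mul (hYpos ω).le, mul_one_div_cancel hp0.ne', Real.rpow_one]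
    rw [hYrec, hω]
    rfl
  · -- strict inequality case
    rw [average_eq_integral, average_eq_integral] at hlt
    have hlt' : (∫ ω, Y ω ^ q ∂μ) < (∫ ω, Y ω ^ p ∂μ) ^ θ := by
      have : (∫ ω, (fun x : ℝ => x ^ θ) (X ω) ∂μ) = ∫ ω, Y ω ^ q ∂μ := by
        congr 1; funext ω; exact hXθ ω
      rwa [this] at hlt
    have hIq : 0 < ∫ ω, Y ω ^ q ∂μ := integral_rpow_pos_aux hYpos hYint hq0 hq1
    have hIp : 0 < ∫ ω, Y ω ^ p ∂μ := integral_rpow_pos_aux hYpos hYint hp0 hp1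
    have hstep : (∫ ω, Y ω ^ q ∂μ) ^ ((k:ℝ) + 1) < ((∫ ω, Y ω ^ p ∂μ) ^ θ) ^ ((k:ℝ) + 1) :=
      Real.rpow_lt_rpow hIq.le hlt' hk10
    have hright : ((∫ ω, Y ω ^ p ∂μ) ^ θ) ^ ((k:ℝ) + 1) = (∫ ω, Y ω ^ p ∂μ) ^ (k:ℝ) := by
      rw [← Real.rpow_mul hIp.le, hθ]
      congr 1
      field_simp
    rw [hright] at hstep
    unfold nuMoment
    have hc1 : ((k + 1 : ℕ) : ℝ) = (k : ℝ) + 1 := by push_cast; ring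
    rw [hc1]
    exact hstep

lemma nu_anti_aux (hYpos : ∀ ω, 0 < Y ω)
    (hYnonconst : ¬ ∃ c : ℝ, ∀ᵐ ω ∂μ, Y ω = c)
    (hYint : Integrable Y μ) {a b : ℕ} (ha : 1 ≤ a) (hab : a < b) :
    nuMoment μ Y b < nuMoment μ Y a := by
  induction b with
  | zero => omega
  | succ n ih =>
    rcases Nat.lt_succ_iff_lt_or_eq.mp hab with h | h
    · exact (nu_step_aux hYpos hYnonconst hYint (by omega : 1 ≤ n)).trans (ih h)
    · subst h
      exact nu_step_aux hYpos hYnonconst hYint ha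

end Aux

/-- For a positive, non-(a.s.)-constant random variable `Y` with `E[Y] < ∞`, the sequence of
geometric means `G_m := (ν_m ν_{m-1} ⋯ ν_1)^{1/m}` is strictly decreasing in `m` (for `m ≥ 1`). -/
theorem geom_mean_nu_strict_anti {Ω : Type*} [MeasurableSpace Ω] (μ : Measure Ω)
    [IsProbabilityMeasure μ]
    (Y : Ω → ℝ) (hYpos : ∀ ω, 0 < Y ω)
    (hYnonconst : ¬ ∃ c : ℝ, ∀ᵐ ω ∂μ, Y ω = c)
    (hYint : Integrable Y μ) :
    ∀ m : ℕ, 1 ≤ m →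
      (∏ n ∈ Finset.Icc 1 (m + 1), nuMoment μ Y n) ^ ((1 : ℝ) / ((m : ℝ) + 1))
        < (∏ n ∈ Finset.Icc 1 m, nuMoment μ Y n) ^ ((1 : ℝ) / (m : ℝ)) := by
  intro m hm
  have hm0 : (0:ℝ) < m := by exact_mod_cast hm
  have hνpos : ∀ n, 1 ≤ n → 0 < nuMoment μ Y n := by
    intro n hn
    have hn0 : (0:ℝ) < n := by exact_mod_cast hn
    have hp0 : (0:ℝ) < 1 / (n:ℝ) := by positivity
    have hp1 : (1:ℝ) / (n:ℝ) ≤ 1 := by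
      rw [div_le_one hn0]; exact_mod_cast hn
    exact Real.rpow_pos_of_pos (integral_rpow_pos_aux hYpos hYint hp0 hp1) _
  set P : ℝ := ∏ n ∈ Finset.Icc 1 m, nuMoment μ Y n with hPdef
  set ν' : ℝ := nuMoment μ Y (m + 1) with hν'def
  have hP : 0 < P :=
    Finset.prod_pos fun n hn => hνpos n (Finset.mem_Icc.mp hn).1
  have hν' : 0 < ν' := hνpos (m + 1) (by omega)
  have hsplit : (∏ n ∈ Finset.Icc 1 (m + 1), nuMoment μ Y n) = P * ν' := by
    rw [hPdef, hν'def, Finset.prod_Icc_succ_top (by omega : 1 ≤ m + 1)]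
  have key : ν' ^ m < P := by
    have h1 : ∏ _n ∈ Finset.Icc 1 m, ν' < ∏ n ∈ Finset.Icc 1 m, nuMoment μ Y n := by
      refine Finset.prod_lt_prod_of_nonempty (fun n hn => hν') (fun n hn => ?_)
        (Finset.nonempty_Icc.mpr hm)
      obtain ⟨h1n, hnm⟩ := Finset.mem_Icc.mp hn
      exact nu_anti_aux hYpos hYnonconst hYint h1n (by omega)
    rwa [Finset.prod_const, Nat.card_Icc, Nat.add_sub_cancel] at h1
  rw [hsplit]
  -- compare after raising to the power m*(m+1)
  have hPν : (0:ℝ) < P * ν' := mul_pos hP hν'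
  have hRHSnn : (0:ℝ) ≤ P ^ ((1:ℝ) / (m:ℝ)) := (Real.rpow_pos_of_pos hP _).le
  refine lt_of_pow_lt_pow_left₀ (m * (m + 1)) hRHSnn ?_
  have hL : ((P * ν') ^ ((1:ℝ) / ((m:ℝ) + 1))) ^ (m * (m + 1)) = P ^ m * ν' ^ m := by
    rw [← Real.rpow_natCast (((P * ν') ^ ((1:ℝ) / ((m:ℝ) + 1)))) (m * (m + 1)),
      ← Real.rpow_mul hPν.le]
    push_cast
    rw [show (1:ℝ) / ((m:ℝ) + 1) * ((m:ℝ) * ((m:ℝ) + 1)) = (m:ℝ) by field_simp]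
    rw [Real.rpow_natCast, mul_pow]
  have hR : (P ^ ((1:ℝ) / (m:ℝ))) ^ (m * (m + 1)) = P ^ (m + 1) := by
    rw [← Real.rpow_natCast ((P ^ ((1:ℝ) / (m:ℝ)))) (m * (m + 1)),
      ← Real.rpow_mul hP.le]
    push_cast
    rw [show (1:ℝ) / (m:ℝ) * ((m:ℝ) * ((m:ℝ) + 1)) = (m:ℝ) + 1 by field_simp]
    rw [show ((m:ℝ) + 1) = ((m + 1 : ℕ) : ℝ) by push_cast; ring, Real.rpow_natCast]
  rw [hL, hR, pow_succ]
  exact mul_lt_mul_of_pos_left key (pow_pos hP m)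
end

section
/- Let g be a positive, non-degenerate random variable with ν_1 := E[1/g] < ∞, and for B > 0 define the optimal two-slot expected energy J̄₂ᵒᵖᵗ(B) := E_g[ min_{0 ≤ b ≤ B} ( (2^b − 1)/g + ν_1 (2^{B−b} − 1) ) ] and the equal-bit expected energy J̄₂ᵉᑫ(B) := 2 (2^{B/2} − 1) ν_1. Then lim_{B → 0⁺} J̄₂ᵉᑫ(B) / J̄₂ᵒᵖᵗ(B) = ν_1 / E[min(1/g, ν_1)]. -/
open MeasureTheory Filter

/-- Expected total energy of the optimal causal two-slot scheduler:
`J̄₂ᵒᵖᵗ(B) = E_g[ min_{0 ≤ b ≤ B} ( (2^b − 1)/g + ν₁ (2^{B−b} − 1) ) ]` with `ν₁ = E[1/g]`. -/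
noncomputable def Jopt2 {Ω : Type*} [MeasurableSpace Ω] (μ : Measure Ω) (g : Ω → ℝ)
    (B : ℝ) : ℝ :=
  ∫ ω, sInf ((fun b : ℝ => ((2 : ℝ) ^ b - 1) / g ω
      + (∫ ω', 1 / g ω' ∂μ) * ((2 : ℝ) ^ (B - b) - 1)) '' Set.Icc 0 B) ∂μ

/-- Expected total energy of the equal-bit two-slot scheduler:
`J̄₂ᵉᑫ(B) = 2 (2^{B/2} − 1) ν₁` with `ν₁ = E[1/g]`. -/
noncomputable def Jeq2 {Ω : Type*} [MeasurableSpace Ω] (μ : Measure Ω) (g : Ω → ℝ)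
    (B : ℝ) : ℝ :=
  2 * ((2 : ℝ) ^ (B / 2) - 1) * (∫ ω, 1 / g ω ∂μ)

/-!
For `x, ν ≥ 0` and `B ≥ 0`, the minimum of `(2 ^ b - 1) x + ν (2 ^ (B - b) - 1)` over
`b ∈ [0, B]` lies between `B log 2 · min x ν` (since `2 ^ t - 1 ≥ t log 2`) and
`(2 ^ B - 1) · min x ν` (take `b = B` or `b = 0`). Integrating at `x = 1 / g`, both bounds give
`J̄₂ᵒᵖᵗ(B) / B → log 2 · E[min (1 / g) ν₁]`, while `J̄₂ᵉᑫ(B) / B → log 2 · ν₁`.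
-/

open Set Real Topology

lemma Real.mul_log_le_rpow_sub_one {a : ℝ} (ha : 0 < a) (t : ℝ) : t * log a ≤ a ^ t - 1 := by
  rw [rpow_def_of_pos ha, mul_comm]
  linarith [add_one_le_exp (log a * t)]

lemma Real.two_rpow_sub_one_nonneg {t : ℝ} (ht : 0 ≤ t) : 0 ≤ (2 : ℝ) ^ t - 1 :=
  sub_nonneg.2 (one_le_rpow one_le_two ht)

lemma MeasureTheory.integral_pos_of_forall_pos {Ω : Type*} [MeasurableSpace Ω] {μ : Measure Ω}
    [NeZero μ] {f : Ω → ℝ} (hf : ∀ ω, 0 < f ω) (hfi : Integrable f μ) : 0 < ∫ ω, f ω ∂μ := by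
  rw [integral_pos_iff_support_of_nonneg (fun ω ↦ (hf ω).le) hfi,
    Function.support_eq_univ fun ω ↦ (hf ω).ne']
  exact Measure.measure_univ_pos.2 (NeZero.ne μ)

noncomputable def optCost (ν B x : ℝ) : ℝ :=
  sInf ((fun b : ℝ => ((2 : ℝ) ^ b - 1) * x + ν * ((2 : ℝ) ^ (B - b) - 1)) '' Icc 0 B)

lemma optCost_bddBelow (ν B x : ℝ) :
    BddBelow ((fun b : ℝ => ((2 : ℝ) ^ b - 1) * x + ν * ((2 : ℝ) ^ (B - b) - 1)) '' Icc 0 B) :=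
  have hpow := continuous_const_rpow (a := 2) two_ne_zero
  isCompact_Icc.bddBelow_image (by fun_prop)

section optCost

variable {ν B : ℝ}

lemma optCost_le_of_mem (x : ℝ) {b : ℝ} (hb : b ∈ Icc 0 B) :
    optCost ν B x ≤ ((2 : ℝ) ^ b - 1) * x + ν * ((2 : ℝ) ^ (B - b) - 1) :=
  csInf_le (optCost_bddBelow ν B x) ⟨b, hb, rfl⟩

lemma optCost_le (hB : 0 ≤ B) (x : ℝ) : optCost ν B x ≤ ((2 : ℝ) ^ B - 1) * min x ν := by
  rcases le_total x ν with hxν | hνx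
  · simpa [min_eq_left hxν] using optCost_le_of_mem (ν := ν) x ⟨hB, le_rfl⟩
  · simpa [min_eq_right hνx, mul_comm] using optCost_le_of_mem (ν := ν) x ⟨le_rfl, hB⟩

lemma mul_log_two_mul_min_le_optCost (hν : 0 ≤ ν) (hB : 0 ≤ B) {x : ℝ} (hx : 0 ≤ x) :
    B * log 2 * min x ν ≤ optCost ν B x := by
  refine le_csInf ⟨_, 0, ⟨le_rfl, hB⟩, rfl⟩ ?_
  rintro _ ⟨b, ⟨hb0, hbB⟩, rfl⟩
  have hmin : 0 ≤ min x ν := le_min hx hν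
  have h₁ : b * log 2 * min x ν ≤ ((2 : ℝ) ^ b - 1) * x :=
    mul_le_mul (mul_log_le_rpow_sub_one two_pos b) (min_le_left x ν) hmin
      (two_rpow_sub_one_nonneg hb0)
  have h₂ : (B - b) * log 2 * min x ν ≤ ν * ((2 : ℝ) ^ (B - b) - 1) := by
    rw [mul_comm ν]
    exact mul_le_mul (mul_log_le_rpow_sub_one two_pos (B - b)) (min_le_right x ν) hmin
      (two_rpow_sub_one_nonneg (by linarith))
  linarith

lemma optCost_mono (hB : 0 ≤ B) : Monotone (optCost ν B) := by
  intro x y hxy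
  refine le_csInf ⟨_, 0, ⟨le_rfl, hB⟩, rfl⟩ ?_
  rintro _ ⟨b, hb, rfl⟩
  have := mul_le_mul_of_nonneg_left hxy (two_rpow_sub_one_nonneg hb.1)
  linarith [optCost_le_of_mem (ν := ν) x hb]

end optCost

section integral

variable {Ω : Type*} [MeasurableSpace Ω] {μ : Measure Ω} {X : Ω → ℝ} {ν B : ℝ}

lemma integrable_optCost_comp [IsFiniteMeasure μ] (hν : 0 ≤ ν) (hB : 0 ≤ B)
    (hX : ∀ ω, 0 ≤ X ω) (hXi : Integrable X μ) :
    Integrable (fun ω ↦ optCost ν B (X ω)) μ := by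
  refine Integrable.mono' ((hXi.inf (integrable_const ν)).const_mul ((2 : ℝ) ^ B - 1))
    ((optCost_mono hB).measurable.comp_aemeasurable hXi.aemeasurable).aestronglyMeasurable
    (ae_of_all _ fun ω ↦ ?_)
  have hmin : 0 ≤ min (X ω) ν := le_min (hX ω) hν
  have hcost : 0 ≤ optCost ν B (X ω) :=
    (by positivity : 0 ≤ B * log 2 * min (X ω) ν).trans
      (mul_log_two_mul_min_le_optCost hν hB (hX ω))
  rw [Real.norm_of_nonneg hcost]
  exact optCost_le hB (X ω)

lemma integral_optCost_comp_le [IsFiniteMeasure μ] (hν : 0 ≤ ν) (hB : 0 ≤ B)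
    (hX : ∀ ω, 0 ≤ X ω) (hXi : Integrable X μ) :
    ∫ ω, optCost ν B (X ω) ∂μ ≤ ((2 : ℝ) ^ B - 1) * ∫ ω, min (X ω) ν ∂μ := by
  rw [← integral_const_mul]
  exact integral_mono (integrable_optCost_comp hν hB hX hXi)
    ((hXi.inf (integrable_const ν)).const_mul _) fun ω ↦ optCost_le hB (X ω)

lemma mul_log_two_mul_integral_min_le [IsFiniteMeasure μ] (hν : 0 ≤ ν) (hB : 0 ≤ B)
    (hX : ∀ ω, 0 ≤ X ω) (hXi : Integrable X μ) :
    B * log 2 * ∫ ω, min (X ω) ν ∂μ ≤ ∫ ω, optCost ν B (X ω) ∂μ := by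
  rw [← integral_const_mul]
  exact integral_mono ((hXi.inf (integrable_const ν)).const_mul _)
    (integrable_optCost_comp hν hB hX hXi) fun ω ↦ mul_log_two_mul_min_le_optCost hν hB (hX ω)

lemma tendsto_integral_optCost_comp_div [IsFiniteMeasure μ] (hν : 0 ≤ ν)
    (hX : ∀ ω, 0 ≤ X ω) (hXi : Integrable X μ) :
    Tendsto (fun B ↦ (∫ ω, optCost ν B (X ω) ∂μ) / B) (𝓝[>] 0)
      (𝓝 (log 2 * ∫ ω, min (X ω) ν ∂μ)) := by
  refine tendsto_of_tendsto_of_tendsto_of_le_of_le' tendsto_const_nhds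
    ((tendsto_rpow_sub_one_log two_pos).mul_const _) ?_ ?_
  all_goals
    filter_upwards [self_mem_nhdsWithin] with B (hB : 0 < B)
  · rw [le_div_iff₀ hB]
    linarith [mul_log_two_mul_integral_min_le (μ := μ) hν hB.le hX hXi]
  · rw [div_le_iff₀ hB, inv_mul_eq_div, div_mul_eq_mul_div, div_mul_cancel₀ _ hB.ne']
    exact integral_optCost_comp_le hν hB.le hX hXi

end integral

lemma Jopt2_eq_integral_optCost {Ω : Type*} [MeasurableSpace Ω] (μ : Measure Ω) (g : Ω → ℝ)
    (B : ℝ) : Jopt2 μ g B = ∫ ω, optCost (∫ ω', 1 / g ω' ∂μ) B (1 / g ω) ∂μ := by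
  simp only [Jopt2, optCost, mul_one_div]

lemma tendsto_Jeq2_div {Ω : Type*} [MeasurableSpace Ω] (μ : Measure Ω) (g : Ω → ℝ) :
    Tendsto (fun B ↦ Jeq2 μ g B / B) (𝓝[>] 0) (𝓝 (log 2 * ∫ ω, 1 / g ω ∂μ)) := by
  have half : Tendsto (fun B : ℝ ↦ 2⁻¹ * B) (𝓝[>] 0) (𝓝[>] 0) := by
    simpa using TendstoNhdsWithinIoi.const_mul (b := (2 : ℝ)⁻¹) (c := 0) (by norm_num) tendsto_id
  refine (((tendsto_rpow_sub_one_log two_pos).comp half).mul_const _).congr fun B ↦ ?_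
  simp only [Function.comp_apply, Jeq2]
  field_simp

theorem ratio_eq_opt_tendsto_zero_general {Ω : Type*} [MeasurableSpace Ω] (μ : Measure Ω)
    [IsProbabilityMeasure μ]
    (g : Ω → ℝ) (hgpos : ∀ ω, 0 < g ω)
    (hint : Integrable (fun ω => 1 / g ω) μ) :
    Tendsto (fun B : ℝ => Jeq2 μ g B / Jopt2 μ g B) (nhdsWithin 0 (Set.Ioi 0))
      (nhds ((∫ ω, 1 / g ω ∂μ)
        / (∫ ω, min (1 / g ω) (∫ ω', 1 / g ω' ∂μ) ∂μ))) := by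
  have hX : ∀ ω, 0 < 1 / g ω := fun ω ↦ one_div_pos.2 (hgpos ω)
  have hν : 0 < ∫ ω, 1 / g ω ∂μ := integral_pos_of_forall_pos hX hint
  have hM : 0 < ∫ ω, min (1 / g ω) (∫ ω', 1 / g ω' ∂μ) ∂μ :=
    integral_pos_of_forall_pos (fun ω ↦ lt_min (hX ω) hν) (hint.inf (integrable_const _))
  have hopt := tendsto_integral_optCost_comp_div hν.le (fun ω ↦ (hX ω).le) hint
  simp only [← Jopt2_eq_integral_optCost] at hopt
  have hratio := (tendsto_Jeq2_div μ g).div hopt (by positivity)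
  rw [mul_div_mul_left _ _ (log_pos one_lt_two).ne'] at hratio
  refine hratio.congr' ?_
  filter_upwards [self_mem_nhdsWithin] with B (hB : 0 < B)
  exact div_div_div_cancel_right₀ hB.ne' _ _

/-- As `B → 0⁺`, the energy ratio of equal-bit to optimal two-slot scheduling tends to
`ν₁ / E[min(1/g, ν₁)]`. -/
theorem ratio_eq_opt_tendsto_zero {Ω : Type*} [MeasurableSpace Ω] (μ : Measure Ω)
    [IsProbabilityMeasure μ]
    (g : Ω → ℝ) (hgpos : ∀ ω, 0 < g ω) (hgmeas : Measurable g)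
    (hgnonconst : ¬ ∃ c : ℝ, ∀ᵐ ω ∂μ, g ω = c)
    (hint : Integrable (fun ω => 1 / g ω) μ) :
    Tendsto (fun B : ℝ => Jeq2 μ g B / Jopt2 μ g B) (nhdsWithin 0 (Set.Ioi 0))
      (nhds ((∫ ω, 1 / g ω ∂μ)
        / (∫ ω, min (1 / g ω) (∫ ω', 1 / g ω' ∂μ) ∂μ))) :=
  ratio_eq_opt_tendsto_zero_general μ g hgpos hint
end

section
/- Let g be a positive, non-degenerate random variable with ν_1 := E[1/g] < ∞, set ν_2 := (E[(1/g)^{1/2}])^2, and for B > 0 define the optimal two-slot expected energy J̄₂ᵒᵖᵗ(B) := E_g[ min_{0 ≤ b ≤ B} ( (2^b − 1)/g + ν_1 (2^{B−b} − 1) ) ] and the equal-bit expected energy J̄₂ᵉᑫ(B) := 2 (2^{B/2} − 1) ν_1. Then lim_{B → ∞} J̄₂ᵉᑫ(B) / J̄₂ᵒᵖᵗ(B) = √(ν_1/ν_2). -/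
open MeasureTheory Filter

/-- inner function -/
noncomputable def innerF (ν c B b : ℝ) : ℝ :=
  ((2 : ℝ) ^ b - 1) / c + ν * ((2 : ℝ) ^ (B - b) - 1)

noncomputable def innerM (ν c B : ℝ) : ℝ :=
  sInf (innerF ν c B '' Set.Icc 0 B)

lemma two_rpow_pos (b : ℝ) : (0:ℝ) < (2:ℝ) ^ b := Real.rpow_pos_of_pos two_pos b

lemma one_le_two_rpow {b : ℝ} (hb : 0 ≤ b) : (1:ℝ) ≤ (2:ℝ) ^ b := by
  have := Real.rpow_le_rpow_of_exponent_le (by norm_num : (1:ℝ) ≤ 2) hb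
  simpa using this

lemma innerF_nonneg {ν c B b : ℝ} (hν : 0 ≤ ν) (hc : 0 < c) (hb : b ∈ Set.Icc 0 B) :
    0 ≤ innerF ν c B b := by
  have h1 : (1:ℝ) ≤ (2:ℝ) ^ b := one_le_two_rpow hb.1
  have h2 : (1:ℝ) ≤ (2:ℝ) ^ (B - b) := one_le_two_rpow (by linarith [hb.2])
  unfold innerF
  have : 0 ≤ ((2:ℝ) ^ b - 1) / c := div_nonneg (by linarith) hc.le
  nlinarith

lemma innerSet_nonempty {ν c B : ℝ} (hB : 0 ≤ B) :
    (innerF ν c B '' Set.Icc 0 B).Nonempty :=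
  ⟨_, Set.mem_image_of_mem _ (by constructor <;> linarith : (B/2) ∈ Set.Icc 0 B)⟩

lemma innerSet_bddBelow {ν c B : ℝ} (hν : 0 ≤ ν) (hc : 0 < c) :
    BddBelow (innerF ν c B '' Set.Icc 0 B) :=
  ⟨0, by rintro v ⟨b, hb, rfl⟩; exact innerF_nonneg hν hc hb⟩

lemma innerM_nonneg {ν c B : ℝ} (hν : 0 ≤ ν) (hc : 0 < c) (hB : 0 ≤ B) :
    0 ≤ innerM ν c B :=
  le_csInf (innerSet_nonempty hB) (by rintro v ⟨b, hb, rfl⟩; exact innerF_nonneg hν hc hb)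

lemma innerM_le {ν c B : ℝ} (hν : 0 ≤ ν) (hc : 0 < c) (hB : 0 ≤ B) :
    innerM ν c B ≤ (1/c + ν) * (2:ℝ) ^ (B/2) := by
  have hmem : innerF ν c B (B/2) ∈ innerF ν c B '' Set.Icc 0 B :=
    Set.mem_image_of_mem _ (by constructor <;> linarith)
  have h1 : innerM ν c B ≤ innerF ν c B (B/2) := csInf_le (innerSet_bddBelow hν hc) hmem
  have h2 : innerF ν c B (B/2) ≤ (1/c + ν) * (2:ℝ) ^ (B/2) := by
    unfold innerF
    have : B - B/2 = B/2 := by ring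
    rw [this]
    have ht : (0:ℝ) < (2:ℝ) ^ (B/2) := two_rpow_pos _
    have h1c : (0:ℝ) < 1/c := by positivity
    have : ((2:ℝ) ^ (B/2) - 1) / c = (1/c) * ((2:ℝ) ^ (B/2) - 1) := by ring
    rw [this]
    nlinarith
  linarith

/-- square of 2^(B/2) -/
lemma sq_two_rpow_half (B : ℝ) : ((2:ℝ) ^ (B/2)) * ((2:ℝ) ^ (B/2)) = (2:ℝ) ^ B := by
  rw [← Real.rpow_add two_pos]; norm_num

lemma innerM_ge {ν c B : ℝ} (hν : 0 ≤ ν) (hc : 0 < c) (hB : 0 ≤ B) :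
    2 * Real.sqrt (ν/c) * (2:ℝ) ^ (B/2) - (1/c + ν) ≤ innerM ν c B := by
  apply le_csInf (innerSet_nonempty hB)
  rintro v ⟨b, hb, rfl⟩
  set r := Real.sqrt (ν/c) with hr
  set t := (2:ℝ) ^ (B/2) with htdef
  have hrt : r * r = ν / c := Real.mul_self_sqrt (by positivity)
  have ht2 : t * t = (2:ℝ) ^ B := sq_two_rpow_half B
  set u := (1/c) * (2:ℝ) ^ b with hu
  set w := ν * (2:ℝ) ^ (B - b) with hw
  have huv : u * w = (r * t) * (r * t) := by
    have : (2:ℝ) ^ b * (2:ℝ) ^ (B - b) = (2:ℝ) ^ B := by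
      rw [← Real.rpow_add two_pos]; ring_nf
    calc u * w = (ν / c) * ((2:ℝ) ^ b * (2:ℝ) ^ (B-b)) := by rw [hu, hw]; ring
    _ = (ν/c) * (2:ℝ)^B := by rw [this]
    _ = (r*t)*(r*t) := by rw [← hrt, ← ht2]; ring
  have hupos : 0 < u := by have := two_rpow_pos b; positivity
  have hwnn : 0 ≤ w := by have := (two_rpow_pos (B-b)).le; positivity
  have hrtnn : 0 ≤ r * t := by positivity
  have key : 2 * (r * t) ≤ u + w := by nlinarith [sq_nonneg (u - r * t)]
  have : innerF ν c B b = u + w - (1/c + ν) := by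
    unfold innerF; rw [hu, hw]; ring
  rw [this]
  linarith

lemma innerM_eq {ν c B : ℝ} (hν : 0 < ν) (hc : 0 < c)
    (hB : |Real.logb 2 (ν * c)| ≤ B) :
    innerM ν c B = 2 * Real.sqrt (ν/c) * (2:ℝ) ^ (B/2) - (1/c + ν) := by
  have hB0 : 0 ≤ B := le_trans (abs_nonneg _) hB
  set L := Real.logb 2 (ν * c) with hL
  set b₀ := B/2 + L/2 with hb₀
  have hb₀mem : b₀ ∈ Set.Icc 0 B := by
    have h1 := abs_le.1 hB
    constructor <;> [skip; skip] <;> (rw [hb₀]; nlinarith [h1.1, h1.2])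
  set r := Real.sqrt (ν/c) with hr
  set t := (2:ℝ) ^ (B/2) with htdef
  have hrt : r * r = ν / c := Real.mul_self_sqrt (by positivity)
  have ht2 : t * t = (2:ℝ) ^ B := sq_two_rpow_half B
  have htpos : 0 < t := two_rpow_pos _
  have hrpos : 0 < r := Real.sqrt_pos.2 (by positivity)
  have h2L : (2:ℝ) ^ L = ν * c := Real.rpow_logb two_pos (by norm_num) (by positivity)
  have hνc : ν = r * r * c := by
    have : r * r * c = (ν / c) * c := by rw [hrt]
    rw [this]; field_simp
  -- value of u := (1/c) * 2^b₀
  have hu2 : ((1/c) * (2:ℝ) ^ b₀) * ((1/c) * (2:ℝ) ^ b₀) = (r*t)*(r*t) := by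
    have h1 : (2:ℝ) ^ b₀ * (2:ℝ) ^ b₀ = (2:ℝ)^B * (ν * c) := by
      rw [← Real.rpow_add two_pos, ← h2L, ← Real.rpow_add two_pos]
      congr 1; rw [hb₀]; ring
    have : ((1/c) * (2:ℝ) ^ b₀) * ((1/c) * (2:ℝ) ^ b₀)
        = (1/c) * (1/c) * ((2:ℝ)^B * (ν*c)) := by rw [← h1]; ring
    rw [this, ← ht2]
    rw [hνc]
    field_simp
  have hueq : (1/c) * (2:ℝ) ^ b₀ = r * t := by
    have hup : 0 < (1/c) * (2:ℝ) ^ b₀ := by have := two_rpow_pos b₀; positivity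
    rcases mul_self_eq_mul_self_iff.1 hu2 with h | h
    · exact h
    · nlinarith [mul_pos hrpos htpos]
  have hw2 : (ν * (2:ℝ) ^ (B - b₀)) * (ν * (2:ℝ) ^ (B - b₀)) = (r*t)*(r*t) := by
    have h1 : (2:ℝ) ^ (B - b₀) * (2:ℝ) ^ (B - b₀) = (2:ℝ)^B / (ν * c) := by
      rw [← Real.rpow_add two_pos, ← h2L, ← Real.rpow_sub two_pos]
      congr 1; rw [hb₀]; ring
    have : (ν * (2:ℝ) ^ (B - b₀)) * (ν * (2:ℝ) ^ (B - b₀))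
        = ν * ν * ((2:ℝ)^B / (ν*c)) := by rw [← h1]; ring
    rw [this, ← ht2]
    rw [hνc]
    field_simp
  have hweq : ν * (2:ℝ) ^ (B - b₀) = r * t := by
    have hwp : 0 < ν * (2:ℝ) ^ (B - b₀) := by have := two_rpow_pos (B - b₀); positivity
    rcases mul_self_eq_mul_self_iff.1 hw2 with h | h
    · exact h
    · nlinarith [mul_pos hrpos htpos]
  have hval : innerF ν c B b₀ = 2 * r * t - (1/c + ν) := by
    unfold innerF
    have e1 : ((2:ℝ) ^ b₀ - 1)/c = (1/c) * (2:ℝ)^b₀ - 1/c := by ring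
    rw [e1, hueq]
    have e2 : ν * ((2:ℝ) ^ (B - b₀) - 1) = ν * (2:ℝ)^(B-b₀) - ν := by ring
    rw [e2, hweq]
    ring
  apply le_antisymm
  · calc innerM ν c B ≤ innerF ν c B b₀ :=
        csInf_le (innerSet_bddBelow hν.le hc) (Set.mem_image_of_mem _ hb₀mem)
    _ = _ := by rw [hval]
  · exact innerM_ge hν.le hc hB0

noncomputable def innerM' (ν B y : ℝ) : ℝ :=
  sInf ((fun b => y * ((2:ℝ) ^ b - 1) + ν * ((2:ℝ) ^ (B - b) - 1)) '' Set.Icc 0 B)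

lemma innerM_eq_innerM' (ν c B : ℝ) : innerM ν c B = innerM' ν B (1/c) := by
  unfold innerM innerM' innerF
  congr 1
  apply Set.image_congr
  intro b _
  ring

lemma continuous_two_rpow : Continuous fun b : ℝ => (2:ℝ) ^ b :=
  continuous_iff_continuousAt.2 fun _ => Real.continuousAt_const_rpow two_ne_zero

lemma innerF'_continuous (ν B y : ℝ) :
    Continuous fun b => y * ((2:ℝ) ^ b - 1) + ν * ((2:ℝ) ^ (B - b) - 1) := by
  apply Continuous.add
  · exact continuous_const.mul (continuous_two_rpow.sub continuous_const)
  · exact continuous_const.mul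
      ((continuous_two_rpow.comp (continuous_const.sub continuous_id)).sub continuous_const)

lemma innerM'_bddBelow (ν B y : ℝ) :
    BddBelow ((fun b => y * ((2:ℝ) ^ b - 1) + ν * ((2:ℝ) ^ (B - b) - 1)) '' Set.Icc 0 B) :=
  (isCompact_Icc.image (innerF'_continuous ν B y)).bddBelow

lemma innerM'_le_add (ν B : ℝ) (hB : 0 ≤ B) (y z : ℝ) :
    innerM' ν B y ≤ innerM' ν B z + (2:ℝ) ^ B * |y - z| := by
  unfold innerM'
  rw [← sub_le_iff_le_add]
  apply le_csInf ⟨_, Set.mem_image_of_mem _ (by constructor <;> linarith : (0:ℝ) ∈ Set.Icc 0 B)⟩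
  rintro v ⟨b, hb, rfl⟩
  simp only
  have h1 : sInf ((fun b => y * ((2:ℝ) ^ b - 1) + ν * ((2:ℝ) ^ (B - b) - 1)) '' Set.Icc 0 B)
      ≤ y * ((2:ℝ) ^ b - 1) + ν * ((2:ℝ) ^ (B - b) - 1) :=
    csInf_le (innerM'_bddBelow ν B y) (Set.mem_image_of_mem _ hb)
  have h2 : (y - z) * ((2:ℝ) ^ b - 1) ≤ (2:ℝ) ^ B * |y - z| := by
    have hbl : (1:ℝ) ≤ (2:ℝ) ^ b := one_le_two_rpow hb.1
    have hbu : (2:ℝ) ^ b ≤ (2:ℝ) ^ B :=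
      Real.rpow_le_rpow_of_exponent_le (by norm_num) hb.2
    calc (y - z) * ((2:ℝ) ^ b - 1) ≤ |y - z| * ((2:ℝ) ^ b - 1) := by
          nlinarith [le_abs_self (y - z)]
    _ ≤ |y - z| * (2:ℝ) ^ B := by nlinarith [abs_nonneg (y - z), two_rpow_pos B]
    _ = _ := by ring
  have e : y * ((2:ℝ) ^ b - 1) = z * ((2:ℝ) ^ b - 1) + (y - z) * ((2:ℝ) ^ b - 1) := by ring
  linarith [h1, h2]

lemma innerM'_continuous (ν B : ℝ) (hB : 0 ≤ B) : Continuous (innerM' ν B) := by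
  have hK : (0:ℝ) ≤ (2:ℝ) ^ B := (two_rpow_pos B).le
  apply LipschitzWith.continuous (K := Real.toNNReal ((2:ℝ) ^ B))
  apply LipschitzWith.of_dist_le_mul
  intro y z
  rw [Real.dist_eq, Real.dist_eq, Real.coe_toNNReal _ hK]
  have h1 := innerM'_le_add ν B hB y z
  have h2 := innerM'_le_add ν B hB z y
  rw [abs_sub_comm z y] at h2
  rw [abs_le]
  constructor <;> linarith

/-- As `B → ∞`, the energy ratio of equal-bit to optimal two-slot scheduling tends to
`√(ν₁/ν₂)`, where `ν₁ = E[1/g]` and `ν₂ = (E[(1/g)^{1/2}])²`. -/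
theorem ratio_eq_opt_tendsto_infty {Ω : Type*} [MeasurableSpace Ω] (μ : Measure Ω)
    [IsProbabilityMeasure μ]
    (g : Ω → ℝ) (hgpos : ∀ ω, 0 < g ω) (hgmeas : Measurable g)
    (hgnonconst : ¬ ∃ c : ℝ, ∀ᵐ ω ∂μ, g ω = c)
    (hint : Integrable (fun ω => 1 / g ω) μ) :
    Tendsto (fun B : ℝ => Jeq2 μ g B / Jopt2 μ g B) atTop
      (nhds (Real.sqrt ((∫ ω, 1 / g ω ∂μ)
        / (∫ ω, (1 / g ω) ^ ((1 : ℝ) / 2) ∂μ) ^ 2))) := by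
  set ν := ∫ ω, 1 / g ω ∂μ with hνdef
  have hνpos : 0 < ν := by
    rw [hνdef, integral_pos_iff_support_of_nonneg
      (fun ω => (one_div_pos.2 (hgpos ω)).le) hint]
    have : Function.support (fun ω => 1 / g ω) = Set.univ :=
      Set.eq_univ_of_forall fun ω => (one_div_pos.2 (hgpos ω)).ne'
    rw [this]
    simp
  set s := ∫ ω, (1 / g ω) ^ ((1 : ℝ) / 2) ∂μ with hsdef
  have hs_eq : ∀ ω, (1 / g ω) ^ ((1:ℝ)/2) = Real.sqrt (1 / g ω) :=
    fun ω => (Real.sqrt_eq_rpow _).symm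
  have hsmeas : Measurable fun ω => (1 / g ω) ^ ((1:ℝ)/2) := by
    simp only [hs_eq]
    exact Real.continuous_sqrt.measurable.comp (measurable_const.div hgmeas)
  have hsint : Integrable (fun ω => (1 / g ω) ^ ((1:ℝ)/2)) μ := by
    apply Integrable.mono (hint.add (integrable_const 1)) hsmeas.aestronglyMeasurable
    apply Eventually.of_forall
    intro ω
    have hy : 0 < 1 / g ω := one_div_pos.2 (hgpos ω)
    simp only [Pi.add_apply]
    rw [hs_eq, Real.norm_eq_abs, Real.norm_eq_abs,
      abs_of_nonneg (Real.sqrt_nonneg _), abs_of_nonneg (by linarith)]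
    nlinarith [Real.sq_sqrt hy.le, sq_nonneg (Real.sqrt (1 / g ω) - 1)]
  have hspos : 0 < s := by
    rw [hsdef, integral_pos_iff_support_of_nonneg
      (fun ω => Real.rpow_nonneg (one_div_pos.2 (hgpos ω)).le _) hsint]
    have : Function.support (fun ω => (1 / g ω) ^ ((1:ℝ)/2)) = Set.univ :=
      Set.eq_univ_of_forall fun ω =>
        (Real.rpow_pos_of_pos (one_div_pos.2 (hgpos ω)) _).ne'
    rw [this]
    simp
  have hJopt : ∀ B, Jopt2 μ g B = ∫ ω, innerM ν (g ω) B ∂μ := fun B => rfl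
  have htpos : ∀ B : ℝ, (0:ℝ) < (2:ℝ) ^ (B/2) := fun B => two_rpow_pos _
  have hlimt : Tendsto (fun B : ℝ => (2:ℝ) ^ (B/2)) atTop atTop := by
    have h1 : Tendsto (fun B : ℝ => Real.log 2 * (B/2)) atTop atTop := by
      have h0 : (0:ℝ) < Real.log 2 / 2 := by
        have := Real.log_pos (by norm_num : (1:ℝ) < 2)
        positivity
      exact (Tendsto.const_mul_atTop h0 tendsto_id).congr (fun B => by simp; ring)
    exact (Real.tendsto_exp_atTop.comp h1).congr
      fun B => (Real.rpow_def_of_pos two_pos (B/2)).symm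
  have hlimtinv : Tendsto (fun B : ℝ => ((2:ℝ) ^ (B/2))⁻¹) atTop (nhds 0) :=
    hlimt.inv_tendsto_atTop
  -- DCT
  have key : Tendsto (fun B : ℝ => ∫ ω, innerM ν (g ω) B * ((2:ℝ) ^ (B/2))⁻¹ ∂μ) atTop
      (nhds (∫ ω, 2 * Real.sqrt (ν / g ω) ∂μ)) := by
    apply tendsto_integral_filter_of_dominated_convergence
      (bound := fun ω => 1 / g ω + ν)
    · filter_upwards [eventually_ge_atTop (0:ℝ)] with B hB
      have he : (fun ω => innerM ν (g ω) B * ((2:ℝ) ^ (B/2))⁻¹)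
          = fun ω => innerM' ν B ((g ω)⁻¹) * ((2:ℝ) ^ (B/2))⁻¹ := by
        funext ω
        rw [innerM_eq_innerM', one_div]
      rw [he]
      exact (((innerM'_continuous ν B hB).measurable.comp
        hgmeas.inv).mul_const _).aestronglyMeasurable
    · filter_upwards [eventually_ge_atTop (0:ℝ)] with B hB
      apply Eventually.of_forall
      intro ω
      have h1 := innerM_nonneg (ν := ν) (B := B) hνpos.le (hgpos ω) hB
      have h2 := innerM_le (ν := ν) (B := B) hνpos.le (hgpos ω) hB
      have ht := htpos B
      rw [Real.norm_eq_abs, abs_of_nonneg (by positivity)]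
      calc innerM ν (g ω) B * ((2:ℝ) ^ (B/2))⁻¹
          ≤ ((1 / g ω + ν) * (2:ℝ) ^ (B/2)) * ((2:ℝ) ^ (B/2))⁻¹ := by
            apply mul_le_mul_of_nonneg_right h2 (by positivity)
        _ = 1 / g ω + ν := by field_simp
    · exact hint.add (integrable_const ν)
    · apply Eventually.of_forall
      intro ω
      have hc := hgpos ω
      have hev : ∀ᶠ B in atTop, innerM ν (g ω) B * ((2:ℝ) ^ (B/2))⁻¹
          = 2 * Real.sqrt (ν / g ω) - (1 / g ω + ν) * ((2:ℝ) ^ (B/2))⁻¹ := by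
        filter_upwards [eventually_ge_atTop (|Real.logb 2 (ν * g ω)|)] with B hB
        rw [innerM_eq hνpos hc hB]
        have ht := (htpos B).ne'
        field_simp
      apply Tendsto.congr' (EventuallyEq.symm hev)
      have : Tendsto (fun B : ℝ => 2 * Real.sqrt (ν / g ω)
          - (1 / g ω + ν) * ((2:ℝ) ^ (B/2))⁻¹) atTop
          (nhds (2 * Real.sqrt (ν / g ω) - (1 / g ω + ν) * 0)) :=
        tendsto_const_nhds.sub (tendsto_const_nhds.mul hlimtinv)
      simpa using this
  -- identify limit value
  have hf_eq : (fun ω => 2 * Real.sqrt (ν / g ω))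
      = fun ω => (2 * Real.sqrt ν) * ((1 / g ω) ^ ((1:ℝ)/2)) := by
    funext ω
    rw [hs_eq, div_eq_mul_one_div ν, Real.sqrt_mul hνpos.le]
    ring
  have hintval : (∫ ω, 2 * Real.sqrt (ν / g ω) ∂μ) = 2 * Real.sqrt ν * s := by
    rw [hf_eq, integral_const_mul]
  rw [hintval] at key
  have hJoptlim : Tendsto (fun B : ℝ => Jopt2 μ g B * ((2:ℝ) ^ (B/2))⁻¹) atTop
      (nhds (2 * Real.sqrt ν * s)) := by
    apply key.congr
    intro B
    rw [hJopt B]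
    exact integral_mul_const _ _
  have hJeqlim : Tendsto (fun B : ℝ => Jeq2 μ g B * ((2:ℝ) ^ (B/2))⁻¹) atTop
      (nhds (2 * ν)) := by
    have he : ∀ B : ℝ, Jeq2 μ g B * ((2:ℝ) ^ (B/2))⁻¹
        = 2 * ν - 2 * ν * ((2:ℝ) ^ (B/2))⁻¹ := by
      intro B
      have ht := (htpos B).ne'
      unfold Jeq2
      rw [← hνdef]
      field_simp
    have : Tendsto (fun B : ℝ => 2 * ν - 2 * ν * ((2:ℝ) ^ (B/2))⁻¹) atTop
        (nhds (2 * ν - 2 * ν * 0)) := tendsto_const_nhds.sub (tendsto_const_nhds.mul hlimtinv)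
    simp only [mul_zero, sub_zero] at this
    exact this.congr fun B => (he B).symm
  have hne : 2 * Real.sqrt ν * s ≠ 0 := by
    have := Real.sqrt_pos.2 hνpos
    positivity
  have hdiv := hJeqlim.div hJoptlim hne
  have hratio : ∀ B : ℝ, (Jeq2 μ g B * ((2:ℝ) ^ (B/2))⁻¹)
      / (Jopt2 μ g B * ((2:ℝ) ^ (B/2))⁻¹) = Jeq2 μ g B / Jopt2 μ g B := fun B =>
    mul_div_mul_right _ _ (inv_ne_zero (htpos B).ne')
  have hval : 2 * ν / (2 * Real.sqrt ν * s) = Real.sqrt (ν / s ^ 2) := by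
    rw [Real.sqrt_div hνpos.le, Real.sqrt_sq hspos.le,
      show 2 * ν = 2 * (Real.sqrt ν * Real.sqrt ν) from by rw [Real.mul_self_sqrt hνpos.le]]
    have h1 : Real.sqrt ν > 0 := Real.sqrt_pos.2 hνpos
    field_simp
  rw [hval] at hdiv
  exact hdiv.congr hratio
end

section
/- Fix B > 0, ν_1 > 0, and a channel realization g₂ > 0. The function b ↦ (2^b − 1)/g₂ + ν_1 (2^{B−b} − 1) on the interval [0, B] attains its minimum at the unique point b₂* = min(B, max(0, B/2 + (1/2) log₂(g₂ ν_1))). -/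
/-!
Put `c = B/2 + log₂(g₂ ν₁)/2`, so that `2^(2c - B) = g₂ ν₁`. Then
`(2^b - 1)/g₂ + ν₁ (2^(B-b) - 1) = (2^c/g₂)·(2^(b-c) + 2^(c-b)) - 1/g₂ - ν₁`
is an increasing affine function of `cosh ((b - c) log 2)`, hence strictly increasing in `|b - c|`.
The cost is therefore minimised, uniquely, at the point of `[0, B]` nearest to `c`, which is
`min B (max 0 c)`.
-/

open Real Set

lemma abs_min_max_sub_lt_of_ne {α : Type*} [AddCommGroup α] [LinearOrder α] [IsOrderedAddMonoid α]
    {a b c x : α} (hx : x ∈ Icc a b) (hne : x ≠ min b (max a c)) :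
    |min b (max a c) - c| < |x - c| := by
  obtain ⟨hax, hxb⟩ := hx
  rcases le_total c a with hca | hac
  · have hp : min b (max a c) = a := by rw [max_eq_left hca, min_eq_right (hax.trans hxb)]
    rw [hp] at hne ⊢
    rw [abs_of_nonneg (sub_nonneg.2 hca), abs_of_nonneg (sub_nonneg.2 (hca.trans hax))]
    exact sub_lt_sub_right (lt_of_le_of_ne hax (Ne.symm hne)) c
  rcases le_total b c with hbc | hcb
  · have hp : min b (max a c) = b := by rw [max_eq_right hac, min_eq_left hbc]
    rw [hp] at hne ⊢
    rw [abs_of_nonpos (sub_nonpos.2 hbc), abs_of_nonpos (sub_nonpos.2 (hxb.trans hbc))]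
    exact neg_lt_neg (sub_lt_sub_right (lt_of_le_of_ne hxb hne) c)
  · have hp : min b (max a c) = c := by rw [max_eq_right hac, min_eq_right hcb]
    rw [hp] at hne ⊢
    simpa [sub_eq_zero] using hne

lemma two_rpow_add_two_rpow_neg (x : ℝ) : (2 : ℝ) ^ x + 2 ^ (-x) = 2 * cosh (x * log 2) := by
  rw [cosh_eq, rpow_def_of_pos two_pos, rpow_def_of_pos two_pos]
  ring_nf

lemma two_rpow_two_mul_sub_eq {B p : ℝ} (hp : 0 < p) :
    (2 : ℝ) ^ (2 * (B / 2 + logb 2 p / 2) - B) = p := by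
  rw [show 2 * (B / 2 + logb 2 p / 2) - B = logb 2 p by ring,
    rpow_logb two_pos (by norm_num) hp]

lemma two_slot_cost_eq {B ν g c : ℝ} (hg : g ≠ 0) (hc : (2 : ℝ) ^ (2 * c - B) = g * ν) (b : ℝ) :
    ((2 : ℝ) ^ b - 1) / g + ν * ((2 : ℝ) ^ (B - b) - 1)
      = 2 ^ c / g * (2 * cosh ((b - c) * log 2)) - 1 / g - ν := by
  have hfirst : (2 : ℝ) ^ b = 2 ^ c * 2 ^ (b - c) := by rw [← rpow_add two_pos]; ring_nf
  have hsecond : ν * (2 : ℝ) ^ (B - b) = 2 ^ c * 2 ^ (-(b - c)) / g := by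
    rw [← rpow_add two_pos, show c + -(b - c) = (2 * c - B) + (B - b) by ring,
      rpow_add two_pos, hc]
    field_simp
  rw [← two_rpow_add_two_rpow_neg, mul_sub, hsecond, hfirst]
  ring

lemma two_slot_cost_lt_iff {B ν g c : ℝ} (hg : 0 < g) (hc : (2 : ℝ) ^ (2 * c - B) = g * ν)
    {b b' : ℝ} :
    ((2 : ℝ) ^ b - 1) / g + ν * ((2 : ℝ) ^ (B - b) - 1)
        < ((2 : ℝ) ^ b' - 1) / g + ν * ((2 : ℝ) ^ (B - b') - 1) ↔ |b - c| < |b' - c| := by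
  have hk : 0 < (2 : ℝ) ^ c / g := by positivity
  rw [two_slot_cost_eq hg.ne' hc, two_slot_cost_eq hg.ne' hc, sub_lt_sub_iff_right,
    sub_lt_sub_iff_right, mul_lt_mul_iff_right₀ hk, mul_lt_mul_iff_right₀ two_pos, cosh_lt_cosh,
    abs_mul, abs_mul, mul_lt_mul_iff_left₀ (abs_pos.2 (log_pos one_lt_two).ne')]

/-- For `B > 0`, `ν₁ > 0`, `g₂ > 0`, the function
`b ↦ (2^b − 1)/g₂ + ν₁ (2^{B−b} − 1)` on `[0, B]` attains its minimum at the unique point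
`b₂* = min(B, max(0, B/2 + (1/2) log₂(g₂ ν₁)))`. -/
theorem optimal_two_slot_allocation (B ν₁ g₂ : ℝ) (hB : 0 < B) (hν : 0 < ν₁) (hg : 0 < g₂) :
    let f : ℝ → ℝ := fun b => ((2 : ℝ) ^ b - 1) / g₂ + ν₁ * ((2 : ℝ) ^ (B - b) - 1)
    let bstar : ℝ := min B (max 0 (B / 2 + Real.logb 2 (g₂ * ν₁) / 2))
    bstar ∈ Set.Icc 0 B ∧
      (∀ b ∈ Set.Icc 0 B, f bstar ≤ f b) ∧
      ∀ b ∈ Set.Icc 0 B, b ≠ bstar → f bstar < f b := by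
  intro f bstar
  have hc := two_rpow_two_mul_sub_eq (B := B) (mul_pos hg hν)
  have hstrict : ∀ b ∈ Icc 0 B, b ≠ bstar → f bstar < f b := fun b hb hne =>
    (two_slot_cost_lt_iff hg hc).2 (abs_min_max_sub_lt_of_ne hb hne)
  refine ⟨⟨le_min hB.le (le_max_left _ _), min_le_left _ _⟩, fun b hb => ?_, hstrict⟩
  rcases eq_or_ne b bstar with rfl | hne
  · exact le_rfl
  · exact (hstrict b hb hne).le
end

section
/- Let g be a positive, non-degenerate random variable with ν_1 := E[1/g] < ∞, and for B > 0 define J̄₂ᵒᵖᵗ(B) := E_g[ min_{0 ≤ b ≤ B} ( (2^b − 1)/g + ν_1 (2^{B−b} − 1) ) ]. Then lim_{B → 0⁺} J̄₂ᵒᵖᵗ(B) / (2^B − 1) = E[min(1/g, ν_1)]. -/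
open MeasureTheory Filter

noncomputable def Faux (B ν a : ℝ) : ℝ :=
  sInf ((fun b : ℝ => ((2 : ℝ) ^ b - 1) * a + ν * ((2 : ℝ) ^ (B - b) - 1)) '' Set.Icc 0 B)

lemma Faux_set_nonempty (B ν a : ℝ) (hB : 0 ≤ B) :
    ((fun b : ℝ => ((2 : ℝ) ^ b - 1) * a + ν * ((2 : ℝ) ^ (B - b) - 1)) '' Set.Icc 0 B).Nonempty :=
  (Set.nonempty_Icc.2 hB).image _

lemma Faux_elem_nonneg {B ν a : ℝ} (hν : 0 ≤ ν) (ha : 0 ≤ a) {b : ℝ}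
    (hb : b ∈ Set.Icc 0 B) :
    0 ≤ ((2 : ℝ) ^ b - 1) * a + ν * ((2 : ℝ) ^ (B - b) - 1) := by
  have h1 : (1:ℝ) ≤ (2:ℝ) ^ b := Real.one_le_rpow (by norm_num) hb.1
  have h2 : (1:ℝ) ≤ (2:ℝ) ^ (B - b) := Real.one_le_rpow (by norm_num) (by linarith [hb.2])
  nlinarith

lemma Faux_bddBelow (B ν a : ℝ) (hν : 0 ≤ ν) :
    BddBelow ((fun b : ℝ => ((2 : ℝ) ^ b - 1) * a + ν * ((2 : ℝ) ^ (B - b) - 1)) '' Set.Icc 0 B) := by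
  refine ⟨-(((2:ℝ) ^ B - 1) * |a|), ?_⟩
  rintro y ⟨b, hb, rfl⟩
  have h1 : (1:ℝ) ≤ (2:ℝ) ^ b := Real.one_le_rpow (by norm_num) hb.1
  have h2 : (1:ℝ) ≤ (2:ℝ) ^ (B - b) := Real.one_le_rpow (by norm_num) (by linarith [hb.2])
  have h3 : (2:ℝ) ^ b ≤ (2:ℝ) ^ B := Real.rpow_le_rpow_of_exponent_le (by norm_num) hb.2
  have h4 : a ≤ |a| := le_abs_self a
  have h5 : -a ≤ |a| := neg_le_abs a
  show -(((2:ℝ) ^ B - 1) * |a|) ≤ ((2 : ℝ) ^ b - 1) * a + ν * ((2 : ℝ) ^ (B - b) - 1)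
  nlinarith [mul_nonneg hν (by linarith : (0:ℝ) ≤ (2:ℝ) ^ (B - b) - 1),
    mul_nonneg (by linarith : (0:ℝ) ≤ (2:ℝ) ^ B - (2:ℝ) ^ b) (by linarith : (0:ℝ) ≤ |a| + a)]

lemma Faux_nonneg {B ν a : ℝ} (hB : 0 ≤ B) (hν : 0 ≤ ν) (ha : 0 ≤ a) : 0 ≤ Faux B ν a := by
  refine le_csInf (Faux_set_nonempty B ν a hB) ?_
  rintro y ⟨b, hb, rfl⟩
  exact Faux_elem_nonneg hν ha hb

lemma Faux_mono {B ν : ℝ} (hB : 0 ≤ B) (hν : 0 ≤ ν) : Monotone (Faux B ν) := by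
  intro a a' haa'
  refine le_csInf (Faux_set_nonempty B ν a' hB) ?_
  rintro y ⟨b, hb, rfl⟩
  have h1 : (1:ℝ) ≤ (2:ℝ) ^ b := Real.one_le_rpow (by norm_num) hb.1
  refine le_trans (csInf_le (Faux_bddBelow B ν a hν) ⟨b, hb, rfl⟩) ?_
  show ((2 : ℝ) ^ b - 1) * a + ν * ((2 : ℝ) ^ (B - b) - 1)
      ≤ ((2 : ℝ) ^ b - 1) * a' + ν * ((2 : ℝ) ^ (B - b) - 1)
  nlinarith

lemma Faux_le {B ν a : ℝ} (hB : 0 ≤ B) (hν : 0 ≤ ν) (ha : 0 ≤ a) :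
    Faux B ν a ≤ min a ν * ((2:ℝ) ^ B - 1) := by
  have hbdd := Faux_bddBelow B ν a hν
  have hBb : Faux B ν a ≤ ((2 : ℝ) ^ B - 1) * a + ν * ((2 : ℝ) ^ (B - B) - 1) :=
    csInf_le hbdd ⟨B, Set.right_mem_Icc.2 hB, rfl⟩
  have h0b : Faux B ν a ≤ ((2 : ℝ) ^ (0:ℝ) - 1) * a + ν * ((2 : ℝ) ^ (B - 0) - 1) :=
    csInf_le hbdd ⟨0, Set.left_mem_Icc.2 hB, rfl⟩
  rw [sub_self, Real.rpow_zero] at hBb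
  rw [Real.rpow_zero, sub_zero] at h0b
  rcases le_total a ν with h | h
  · rw [min_eq_left h]; nlinarith
  · rw [min_eq_right h]; nlinarith

lemma Faux_ge {B ν a : ℝ} (hB : 0 ≤ B) (hν : 0 ≤ ν) (ha : 0 ≤ a) :
    2 * ((2:ℝ) ^ (B/2) - 1) * min a ν ≤ Faux B ν a := by
  refine le_csInf (Faux_set_nonempty B ν a hB) ?_
  rintro y ⟨b, hb, rfl⟩
  set x := (2:ℝ) ^ b with hx
  set y := (2:ℝ) ^ (B - b) with hy
  set z := (2:ℝ) ^ (B/2) with hz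
  show 2 * (z - 1) * min a ν ≤ (x - 1) * a + ν * (y - 1)
  have hx1 : (1:ℝ) ≤ x := Real.one_le_rpow (by norm_num) hb.1
  have hy1 : (1:ℝ) ≤ y := Real.one_le_rpow (by norm_num) (by linarith [hb.2])
  have hz0 : (0:ℝ) < z := Real.rpow_pos_of_pos (by norm_num) _
  have hxyz : x * y = z * z := by
    rw [hx, hy, hz, ← Real.rpow_add (by norm_num), ← Real.rpow_add (by norm_num)]
    ring_nf
  have hsum : 2 * z ≤ x + y := by nlinarith [sq_nonneg (x - z)]
  have hm0 : 0 ≤ min a ν := le_min ha hν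
  have hma : min a ν ≤ a := min_le_left _ _
  have hmv : min a ν ≤ ν := min_le_right _ _
  nlinarith [mul_nonneg hm0 (by linarith : (0:ℝ) ≤ x + y - 2*z),
    mul_nonneg (by linarith : (0:ℝ) ≤ a - min a ν) (by linarith : (0:ℝ) ≤ x - 1),
    mul_nonneg (by linarith : (0:ℝ) ≤ ν - min a ν) (by linarith : (0:ℝ) ≤ y - 1)]

/-- As `B → 0⁺`, `J̄₂ᵒᵖᵗ(B)/(2^B − 1) → E[min(1/g, ν₁)]` where `ν₁ = E[1/g]`. -/
theorem Jopt2_small_B_asymptotics {Ω : Type*} [MeasurableSpace Ω] (μ : Measure Ω)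
    [IsProbabilityMeasure μ]
    (g : Ω → ℝ) (hgpos : ∀ ω, 0 < g ω) (hgmeas : Measurable g)
    (hgnonconst : ¬ ∃ c : ℝ, ∀ᵐ ω ∂μ, g ω = c)
    (hint : Integrable (fun ω => 1 / g ω) μ) :
    Tendsto (fun B : ℝ => Jopt2 μ g B / ((2 : ℝ) ^ B - 1)) (nhdsWithin 0 (Set.Ioi 0))
      (nhds (∫ ω, min (1 / g ω) (∫ ω', 1 / g ω' ∂μ) ∂μ)) := by
  set ν : ℝ := ∫ ω', 1 / g ω' ∂μ with hν
  have hν0 : 0 ≤ ν := integral_nonneg fun ω => div_nonneg zero_le_one (hgpos ω).le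
  set m : Ω → ℝ := fun ω => min (1 / g ω) ν with hm
  set M : ℝ := ∫ ω, m ω ∂μ with hM
  -- integrability of m
  have hm_int : Integrable m μ := by
    have heq : m = fun ω => ((1 / g ω) + ν - |1 / g ω - ν|) / 2 := by
      funext ω
      show min (1 / g ω) ν = (1 / g ω + ν - |1 / g ω - ν|) / 2
      rcases le_total (1 / g ω) ν with h | h
      · rw [min_eq_left h, abs_of_nonpos (by linarith)]; ring
      · rw [min_eq_right h, abs_of_nonneg (by linarith)]; ring
    rw [heq]
    exact ((hint.add (integrable_const ν)).sub (hint.sub (integrable_const ν)).abs).div_const 2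
  have hM0 : 0 ≤ M := integral_nonneg fun ω => le_min (div_nonneg zero_le_one (hgpos ω).le) hν0
  -- identification of Jopt2 with Faux
  have hJ : ∀ B : ℝ, Jopt2 μ g B = ∫ ω, Faux B ν (1 / g ω) ∂μ := by
    intro B
    unfold Jopt2 Faux
    rw [← hν]
    refine integral_congr_ae (Filter.Eventually.of_forall fun ω => ?_)
    dsimp only
    have hfun : (fun b : ℝ => ((2 : ℝ) ^ b - 1) / g ω + ν * ((2 : ℝ) ^ (B - b) - 1))
        = fun b : ℝ => ((2 : ℝ) ^ b - 1) * (1 / g ω) + ν * ((2 : ℝ) ^ (B - b) - 1) := by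
      funext b; rw [div_eq_mul_one_div]
    rw [hfun]
  -- integral bounds for each B > 0
  have key : ∀ B : ℝ, 0 < B →
      2 * ((2:ℝ) ^ (B/2) - 1) * M ≤ Jopt2 μ g B ∧ Jopt2 μ g B ≤ ((2:ℝ) ^ B - 1) * M := by
    intro B hB
    have ha : ∀ ω, (0:ℝ) ≤ 1 / g ω := fun ω => div_nonneg zero_le_one (hgpos ω).le
    have hub : ∀ ω, Faux B ν (1 / g ω) ≤ ((2:ℝ) ^ B - 1) * m ω := fun ω => by
      rw [hm, mul_comm]; exact Faux_le hB.le hν0 (ha ω)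
    have hlb : ∀ ω, 2 * ((2:ℝ) ^ (B/2) - 1) * m ω ≤ Faux B ν (1 / g ω) := fun ω =>
      Faux_ge hB.le hν0 (ha ω)
    have h0 : ∀ ω, 0 ≤ Faux B ν (1 / g ω) := fun ω => Faux_nonneg hB.le hν0 (ha ω)
    have hmeas : Measurable fun ω => Faux B ν (1 / g ω) :=
      (Faux_mono hB.le hν0).measurable.comp (measurable_const.div hgmeas)
    have hfB_int : Integrable (fun ω => Faux B ν (1 / g ω)) μ := by
      refine Integrable.mono' (hm_int.const_mul ((2:ℝ) ^ B - 1)) hmeas.aestronglyMeasurable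
        (Filter.Eventually.of_forall fun ω => ?_)
      rw [Real.norm_eq_abs, abs_of_nonneg (h0 ω)]
      exact hub ω
    constructor
    · rw [hJ B]
      calc 2 * ((2:ℝ) ^ (B/2) - 1) * M
          = ∫ ω, 2 * ((2:ℝ) ^ (B/2) - 1) * m ω ∂μ := (integral_const_mul _ _).symm
        _ ≤ ∫ ω, Faux B ν (1 / g ω) ∂μ :=
            integral_mono (hm_int.const_mul _) hfB_int hlb
    · rw [hJ B]
      calc ∫ ω, Faux B ν (1 / g ω) ∂μ
          ≤ ∫ ω, ((2:ℝ) ^ B - 1) * m ω ∂μ := integral_mono hfB_int (hm_int.const_mul _) hub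
        _ = ((2:ℝ) ^ B - 1) * M := integral_const_mul _ _
  -- the squeeze
  have hlow_tendsto : Tendsto (fun B : ℝ => (2 * M) / ((2:ℝ) ^ (B/2) + 1))
      (nhdsWithin 0 (Set.Ioi 0)) (nhds M) := by
    have hcont : Continuous fun B : ℝ => (2 * M) / ((2:ℝ) ^ (B/2) + 1) := by
      refine continuous_const.div ?_ fun x => ?_
      · exact (Continuous.rpow continuous_const (continuous_id.div_const 2)
          fun x => Or.inl (by norm_num)).add continuous_const
      · positivity
    have h := (hcont.tendsto 0).mono_left (nhdsWithin_le_nhds (s := Set.Ioi (0:ℝ)))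
    have hval : (2 * M) / ((2:ℝ) ^ ((0:ℝ)/2) + 1) = M := by
      norm_num
    rwa [hval] at h
  refine tendsto_of_tendsto_of_tendsto_of_le_of_le' hlow_tendsto tendsto_const_nhds
    (eventually_mem_nhdsWithin.mono fun B hB => ?_)
    (eventually_mem_nhdsWithin.mono fun B hB => ?_)
  · -- lower bound
    have hB : (0:ℝ) < B := hB
    have hz1 : (1:ℝ) < (2:ℝ) ^ (B/2) := Real.one_lt_rpow (by norm_num) (by linarith)
    have hzz : (2:ℝ) ^ (B/2) * (2:ℝ) ^ (B/2) = (2:ℝ) ^ B := by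
      rw [← Real.rpow_add (by norm_num)]; ring_nf
    have hden : (0:ℝ) < (2:ℝ) ^ B - 1 := by nlinarith
    have heq : (2 * M) / ((2:ℝ) ^ (B/2) + 1)
        = (2 * ((2:ℝ) ^ (B/2) - 1) * M) / ((2:ℝ) ^ B - 1) := by
      rw [div_eq_div_iff (by positivity) hden.ne']
      nlinarith [hzz]
    rw [heq]
    gcongr
    exact (key B hB).1
  · -- upper bound
    have hB : (0:ℝ) < B := hB
    have h1 : (1:ℝ) < (2:ℝ) ^ B := Real.one_lt_rpow (by norm_num) hB
    have hden : (0:ℝ) < (2:ℝ) ^ B - 1 := by linarith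
    rw [div_le_iff₀ hden]
    calc Jopt2 μ g B ≤ ((2:ℝ) ^ B - 1) * M := (key B hB).2
      _ = M * ((2:ℝ) ^ B - 1) := mul_comm _ _
end

section
/- Fix an integer T ≥ 1, B > 0, and positive reals g₁, …, g_T. Suppose γ > 0 satisfies Σ_{t=1}^T max(0, log₂(g_t/γ)) = B. Then the allocation b_t* := max(0, log₂(g_t/γ)) minimizes Σ_{t=1}^T (2^{b_t} − 1)/g_t over all (b₁, …, b_T) with b_t ≥ 0 for all t and Σ_{t=1}^T b_t = B. -/
/-- Tangent line inequality for `2^x` at `y`. -/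
lemma rpow_two_tangent (x y : ℝ) :
    (2:ℝ)^y + Real.log 2 * (2:ℝ)^y * (x - y) ≤ (2:ℝ)^x := by
  have h2 : (0:ℝ) < 2 := by norm_num
  have hx : (2:ℝ)^x = (2:ℝ)^y * (2:ℝ)^(x - y) := by
    rw [← Real.rpow_add h2]; ring_nf
  have hexp := Real.add_one_le_exp (Real.log 2 * (x - y))
  rw [hx, Real.rpow_def_of_pos h2 (x - y)]
  nlinarith [Real.rpow_pos_of_pos h2 y]

/-- Inverse-waterfilling optimality for the non-causal problem: if `γ > 0` satisfies
`Σ_t max(0, log₂(g_t/γ)) = B`, then the allocation `b_t* = max(0, log₂(g_t/γ))` minimizes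
`Σ_t (2^{b_t} − 1)/g_t` over all nonnegative allocations summing to `B`. -/
theorem inverse_waterfilling_optimal (T : ℕ) (hT : 1 ≤ T) (B : ℝ) (hB : 0 < B)
    (g : Fin T → ℝ) (hg : ∀ t, 0 < g t) (γ : ℝ) (hγ : 0 < γ)
    (hsum : ∑ t, max 0 (Real.logb 2 (g t / γ)) = B) :
    ∀ b : Fin T → ℝ, (∀ t, 0 ≤ b t) → ∑ t, b t = B →
      ∑ t, ((2 : ℝ) ^ (max 0 (Real.logb 2 (g t / γ))) - 1) / g t
        ≤ ∑ t, ((2 : ℝ) ^ (b t) - 1) / g t := by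
  intro b hb hbsum
  set c := Real.log 2 with hc
  have hcpos : 0 < c := Real.log_pos (by norm_num)
  set bs : Fin T → ℝ := fun t => max 0 (Real.logb 2 (g t / γ)) with hbs
  -- pointwise inequality
  have key : ∀ t, ((2:ℝ) ^ (bs t) - 1) / g t + (c / γ) * (b t - bs t)
      ≤ ((2:ℝ) ^ (b t) - 1) / g t := by
    intro t
    have hgt := hg t
    have htan := rpow_two_tangent (b t) (bs t)
    have heq : ((2:ℝ)^(bs t) - 1)/g t + (c/γ)*(b t - bs t)
        = ((2:ℝ)^(bs t) - 1 + g t * ((c/γ)*(b t - bs t)))/g t := by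
      field_simp
    rw [heq]
    gcongr
    rcases le_or_gt (Real.logb 2 (g t / γ)) 0 with h0 | h0
    · -- bs t = 0, g t ≤ γ
      have hbst : bs t = 0 := by simp [hbs, h0]
      have hgle : g t ≤ γ := by
        have := (Real.logb_nonpos_iff (by norm_num) (div_pos hgt hγ)).mp h0
        calc g t = (g t / γ) * γ := by field_simp
        _ ≤ 1 * γ := by nlinarith
        _ = γ := one_mul γ
      have h3 : g t * (c / γ) ≤ c := by
        have h4 : c / γ * g t ≤ c / γ * γ :=
          mul_le_mul_of_nonneg_left hgle (by positivity)
        rw [div_mul_cancel₀ c (ne_of_gt hγ)] at h4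
        linarith [h4]
      rw [hbst] at htan ⊢
      simp only [Real.rpow_zero, sub_zero] at htan ⊢
      nlinarith [mul_nonneg (sub_nonneg.mpr h3) (hb t)]
    · -- bs t = logb 2 (g t / γ), 2^{bs t} = g t / γ
      have hbst : bs t = Real.logb 2 (g t / γ) := max_eq_right h0.le
      have hpow : (2:ℝ) ^ (bs t) = g t / γ := by
        rw [hbst]; exact Real.rpow_logb (by norm_num) (by norm_num) (div_pos hgt hγ)
      have h4 : g t * ((c/γ)*(b t - bs t)) = c * (2:ℝ)^(bs t) * (b t - bs t) := by
        rw [hpow]; field_simp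
      linarith [htan]
  calc ∑ t, ((2:ℝ) ^ (bs t) - 1) / g t
      = ∑ t, (((2:ℝ) ^ (bs t) - 1) / g t + (c / γ) * (b t - bs t)) := by
        rw [Finset.sum_add_distrib, ← Finset.mul_sum]
        simp only [Finset.sum_sub_distrib, hbsum]
        rw [show ∑ t, bs t = B from hsum]
        ring
    _ ≤ ∑ t, ((2:ℝ) ^ (b t) - 1) / g t := Finset.sum_le_sum fun t _ => key t
end
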